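/- Let f(x) = log(−log x) on J = (0, 1/e) and let T_k f = max(−k, min(k, f)) be its truncation at level k. Then for every k ∈ ℕ one has ‖f − T_k f‖_{BLO(J)} ≤ log(1 + e^{−k}); in particular ‖f − T_k f‖_{BLO(J)} → 0 as k → ∞, so the unbounded function f is approximable in BLO by its truncations. -/

import Mathlib

/-!
On `(0, e⁻¹)` the function `f = log (-log x)` is positive and decreasing, so
`f - T_k f = (f - k)⁺` is decreasing and its essential infimum over `[a, b]` is its value at `b`.
Where `f ≥ k`, i.e. left of the point `exp (-e^k)`, the concavity of `log` bounds the mean of `f`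
over `[a, b]` by the log of the mean of `-log x`, which is at most `1 - log b`; and
`log (1 - log b) - log (-log b) = log (1 + 1 / (-log b)) ≤ log (1 + e^(-k))` since
`-log b ≥ e^k` there. To the right of `exp (-e^k)` the difference vanishes.
-/

open MeasureTheory Filter Set

noncomputable section

/-- Mean value of `f` over the interval `[a,b]`. -/
def intAvg (f : ℝ → ℝ) (a b : ℝ) : ℝ := (b - a)⁻¹ * ∫ x in a..b, f x

/-- Essential infimum of `f` over the interval `[a,b]`. -/
def essInfIcc (f : ℝ → ℝ) (a b : ℝ) : ℝ :=
  essInf f (volume.restrict (Set.Icc a b))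

/-- Lower oscillation of `f` over `[a,b]`: mean minus essential infimum. -/
def lowOsc (f : ℝ → ℝ) (a b : ℝ) : ℝ := intAvg f a b - essInfIcc f a b

/-- The set of lower oscillations of `f` over compact subintervals of `Ω`. -/
def oscSetOn (f : ℝ → ℝ) (Ω : Set ℝ) : Set ℝ :=
  {c | ∃ a b : ℝ, a < b ∧ Set.Icc a b ⊆ Ω ∧ c = lowOsc f a b}

def oscSet (f : ℝ → ℝ) : Set ℝ := oscSetOn f Set.univ

/-- BLO seminorm relative to `Ω`. -/
def bloNormOn (f : ℝ → ℝ) (Ω : Set ℝ) : ℝ := sSup (oscSetOn f Ω)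

/-- The BLO seminorm on ℝ. -/
def bloNorm (f : ℝ → ℝ) : ℝ := sSup (oscSet f)

/-- `f ∈ BLO(ℝ)`. -/
def MemBLO (f : ℝ → ℝ) : Prop :=
  MeasureTheory.LocallyIntegrable f ∧ BddAbove (oscSet f)

/-- `b ∈ L∞(ℝ)`. -/
def MemLinfty (b : ℝ → ℝ) : Prop :=
  AEStronglyMeasurable b volume ∧ ∃ M : ℝ, ∀ᵐ x ∂volume, |b x| ≤ M

/-- The `L∞` norm of `b`. -/
def linftyNorm (b : ℝ → ℝ) : ℝ :=
  sInf {M : ℝ | 0 ≤ M ∧ ∀ᵐ x ∂volume, |b x| ≤ M}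

/-- `b ∈ L∞(Ω)`. -/
def MemLinftyOn (b : ℝ → ℝ) (Ω : Set ℝ) : Prop :=
  AEStronglyMeasurable b (volume.restrict Ω) ∧
    ∃ M : ℝ, ∀ᵐ x ∂volume, x ∈ Ω → |b x| ≤ M

/-- Uncentered Hardy–Littlewood maximal function of `g` (over intervals containing `x`). -/
def maxFn (g : ℝ → ℝ) (x : ℝ) : ℝ :=
  sSup {c | ∃ a b : ℝ, a < b ∧ x ∈ Set.Icc a b ∧ c = (b - a)⁻¹ * ∫ t in a..b, |g t|}

/-- The Muckenhoupt `A₁` inequality with constant `C` over compact subintervals of `Ω`. -/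
def A1BoundOn (w : ℝ → ℝ) (Ω : Set ℝ) (C : ℝ) : Prop :=
  ∀ a b : ℝ, a < b → Set.Icc a b ⊆ Ω → intAvg w a b ≤ C * essInfIcc w a b

/-- `w` belongs to the Muckenhoupt class `A₁` relative to `Ω`. -/
def MemA1On (w : ℝ → ℝ) (Ω : Set ℝ) : Prop :=
  MeasureTheory.LocallyIntegrableOn w Ω ∧
    (∀ᵐ x ∂volume, x ∈ Ω → 0 ≤ w x) ∧ ∃ C : ℝ, A1BoundOn w Ω C

/-- `w` belongs to the Muckenhoupt class `A₁` on ℝ. -/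
def MemA1 (w : ℝ → ℝ) : Prop := MemA1On w Set.univ

/-- The `A₁` constant of a weight `w` on ℝ. -/
def a1Const (w : ℝ → ℝ) : ℝ := sInf {C : ℝ | 0 ≤ C ∧ A1BoundOn w Set.univ C}

/-- `σ(f) = inf {μ > 0 : e^(f/μ) ∈ A₁}`. -/
def sigmaBLO (f : ℝ → ℝ) : ℝ :=
  sInf {μ : ℝ | 0 < μ ∧ MemA1 fun x => Real.exp (f x / μ)}

/-- Admissible values `α + ‖b‖_∞` for decompositions `f = α log(Mg) + b`. -/
def newNormSet (f : ℝ → ℝ) : Set ℝ :=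
  {c | ∃ α : ℝ, 0 < α ∧ ∃ b g : ℝ → ℝ, MemLinfty b ∧ MeasureTheory.LocallyIntegrable g ∧
    (f =ᵐ[volume] fun x => α * Real.log (maxFn g x) + b x) ∧
    c = α + linftyNorm b}

/-- The new norm `‖f‖'_BLO`. -/
def newNorm (f : ℝ → ℝ) : ℝ := sInf (newNormSet f)

/-- `W_a(f)`: supremum of lower oscillations over intervals of length at most `a`. -/
def Wosc (f : ℝ → ℝ) (a : ℝ) : ℝ :=
  sSup {c | ∃ s t : ℝ, s < t ∧ t - s ≤ a ∧ c = lowOsc f s t}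

/-- `f ∈ VLO(ℝ)`. -/
def MemVLO (f : ℝ → ℝ) : Prop :=
  MemBLO f ∧ Filter.Tendsto (Wosc f) (nhdsWithin 0 (Set.Ioi 0)) (nhds 0)

/-- Mean oscillation of `f` over `[a,b]`. -/
def meanOsc (f : ℝ → ℝ) (a b : ℝ) : ℝ :=
  (b - a)⁻¹ * ∫ x in a..b, |f x - intAvg f a b|

def bmoSet (f : ℝ → ℝ) : Set ℝ := {c | ∃ a b : ℝ, a < b ∧ c = meanOsc f a b}

/-- The BMO seminorm. -/
def bmoNorm (f : ℝ → ℝ) : ℝ := sSup (bmoSet f)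

/-- `f ∈ BMO(ℝ)`. -/
def MemBMO (f : ℝ → ℝ) : Prop :=
  MeasureTheory.LocallyIntegrable f ∧ BddAbove (bmoSet f)

/-- supremum of mean oscillations over intervals of length at most `a`. -/
def WoscM (f : ℝ → ℝ) (a : ℝ) : ℝ :=
  sSup {c | ∃ s t : ℝ, s < t ∧ t - s ≤ a ∧ c = meanOsc f s t}

/-- `f ∈ VMO(ℝ)`. -/
def MemVMO (f : ℝ → ℝ) : Prop :=
  MemBMO f ∧ Filter.Tendsto (WoscM f) (nhdsWithin 0 (Set.Ioi 0)) (nhds 0)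


open Real

theorem sub_max_min_eq_max_sub_zero {k y : ℝ} (hk : 0 ≤ k) (hy : -k ≤ y) :
    y - max (-k) (min k y) = max (y - k) 0 := by
  rcases le_total y k with h | h
  · rw [min_eq_right h, max_eq_right hy, max_eq_right (by linarith)]
    ring
  · rw [min_eq_left h, max_eq_right (by linarith), max_eq_left (by linarith)]

section BLO

variable {f g : ℝ → ℝ} {a b : ℝ}

theorem lowOsc_congr (hab : a ≤ b) (hfg : EqOn f g (Icc a b)) :
    lowOsc f a b = lowOsc g a b := by
  have hint : ∫ x in a..b, f x = ∫ x in a..b, g x :=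
    intervalIntegral.integral_congr (by rwa [uIcc_of_le hab])
  have hinf : essInfIcc f a b = essInfIcc g a b :=
    essInf_congr_ae ((ae_restrict_mem measurableSet_Icc).mono hfg)
  simp only [lowOsc, intAvg, hint, hinf]

theorem volume_restrict_Icc_ne_zero (hab : a < b) : volume.restrict (Icc a b) ≠ 0 := by
  simpa [Measure.restrict_eq_zero] using hab

theorem lowOsc_const (hab : a < b) (c : ℝ) : lowOsc (fun _ => c) a b = 0 := by
  have hba : b - a ≠ 0 := sub_ne_zero.2 hab.ne'
  simp [lowOsc, intAvg, essInfIcc, essInf_const c (volume_restrict_Icc_ne_zero hab), hba]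

theorem AntitoneOn.le_essInfIcc (hf : AntitoneOn f (Icc a b)) (hab : a < b) :
    f b ≤ essInfIcc f a b := by
  have hmem := ae_restrict_mem (μ := volume) (measurableSet_Icc (a := a) (b := b))
  have : (ae (volume.restrict (Icc a b))).NeBot := ae_neBot.2 (volume_restrict_Icc_ne_zero hab)
  exact le_essInf_of_ae_le _ (hmem.mono fun x hx => hf hx (right_mem_Icc.2 hab.le) hx.2)
    (isCoboundedUnder_ge_of_eventually_le _
      (hmem.mono fun x hx => hf (left_mem_Icc.2 hab.le) hx hx.1))

variable {Ω : Set ℝ} {B : ℝ}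

theorem bddAbove_oscSetOn_of_forall_lowOsc_le
    (h : ∀ a b, a < b → Icc a b ⊆ Ω → lowOsc f a b ≤ B) : BddAbove (oscSetOn f Ω) := by
  refine ⟨B, ?_⟩
  rintro _ ⟨a, b, hab, hsub, rfl⟩
  exact h a b hab hsub

theorem bloNormOn_le_of_forall_lowOsc_le (hB : 0 ≤ B)
    (h : ∀ a b, a < b → Icc a b ⊆ Ω → lowOsc f a b ≤ B) : bloNormOn f Ω ≤ B := by
  refine Real.sSup_le ?_ hB
  rintro _ ⟨a, b, hab, hsub, rfl⟩
  exact h a b hab hsub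

end BLO

theorem Real.exp_neg_one_lt_one : exp (-1) < 1 := exp_lt_one_iff.2 (by norm_num)

theorem Real.log_le_log_add_div_sub_one {x m : ℝ} (hx : 0 < x) (hm : 0 < m) :
    log x ≤ log m + x / m - 1 := by
  have h := log_le_sub_one_of_pos (div_pos hx hm)
  rw [log_div hx.ne' hm.ne'] at h
  linarith

section LogNegLog

variable {a b x K : ℝ}

theorem neg_log_pos (hx : 0 < x) (hx1 : x < 1) : 0 < -log x :=
  neg_pos.2 (log_neg hx hx1)

theorem log_neg_log_le_iff (hx : 0 < x) (hx1 : x < 1) :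
    log (-log x) ≤ K ↔ exp (-exp K) ≤ x := by
  rw [log_le_iff_le_exp (neg_log_pos hx hx1), neg_le, le_log_iff_exp_le hx]

theorem le_log_neg_log_iff (hx : 0 < x) (hx1 : x < 1) :
    K ≤ log (-log x) ↔ x ≤ exp (-exp K) := by
  rw [le_log_iff_exp_le (neg_log_pos hx hx1), le_neg, log_le_iff_le_exp hx]

theorem antitoneOn_log_neg_log : AntitoneOn (fun x => log (-log x)) (Ioo 0 1) :=
  fun _ hx _ hy hxy =>
    log_le_log (neg_log_pos hy.1 hy.2) (neg_le_neg (log_le_log hx.1 hxy))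

theorem continuousOn_log_neg_log : ContinuousOn (fun x => log (-log x)) (Ioo 0 1) :=
  (continuousOn_log.mono fun _ hx => hx.1.ne').neg.log fun _ hx => (neg_log_pos hx.1 hx.2).ne'

theorem integral_neg_log_le (ha : 0 < a) (hab : a ≤ b) :
    ∫ x in a..b, -log x ≤ (b - a) * (1 - log b) := by
  have hlog : a * log a ≤ a * log b := mul_le_mul_of_nonneg_left (log_le_log ha hab) ha.le
  rw [intervalIntegral.integral_neg, integral_log]
  nlinarith

/-- Jensen's inequality for the concave `log`, through its tangent line at `1 - log b`. -/
theorem integral_log_neg_log_le (ha : 0 < a) (hab : a ≤ b) (hb : b < 1) :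
    ∫ x in a..b, log (-log x) ≤ (b - a) * log (1 - log b) := by
  set m := 1 - log b
  have hm : 0 < m := by linarith [neg_log_pos (ha.trans_le hab) hb]
  have hsub : Icc a b ⊆ Ioo 0 1 := Icc_subset_Ioo ha hb
  have hneglog : IntervalIntegrable (fun x => -log x) volume a b :=
    (intervalIntegral.intervalIntegrable_log
      (by rw [uIcc_of_le hab]; exact fun h => ha.not_ge h.1)).neg
  have htangent : IntervalIntegrable (fun x => log m - 1 + -log x / m) volume a b :=
    intervalIntegrable_const.add (hneglog.div_const m)
  calc ∫ x in a..b, log (-log x)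
      ≤ ∫ x in a..b, (log m - 1 + -log x / m) :=
        intervalIntegral.integral_mono_on hab
          ((continuousOn_log_neg_log.mono hsub).intervalIntegrable_of_Icc hab) htangent
          fun x hx => by
            have := log_le_log_add_div_sub_one (neg_log_pos (hsub hx).1 (hsub hx).2) hm
            linarith
    _ = (b - a) * (log m - 1) + (∫ x in a..b, -log x) / m := by
        rw [intervalIntegral.integral_add intervalIntegrable_const (hneglog.div_const m),
          intervalIntegral.integral_const, intervalIntegral.integral_div, smul_eq_mul]
    _ ≤ (b - a) * (log m - 1) + (b - a) * m / m := by
        gcongr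
        exact integral_neg_log_le ha hab
    _ = (b - a) * log m := by field_simp; ring

theorem log_one_sub_log_le (hb : exp K ≤ -log b) :
    log (1 - log b) ≤ log (-log b) + log (1 + exp (-K)) := by
  have hpos : 0 < -log b := (exp_pos K).trans_le hb
  rw [← log_mul hpos.ne' (by positivity)]
  refine log_le_log (by linarith) ?_
  have : 1 ≤ -log b * exp (-K) := by
    rw [exp_neg, ← div_eq_mul_inv, le_div_iff₀ (exp_pos K), one_mul]
    exact hb
  nlinarith

end LogNegLog

def logNegLogExcess (K x : ℝ) : ℝ := max (log (-log x) - K) 0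

section LogNegLogExcess

variable {a b x K : ℝ}

theorem logNegLogExcess_eq_zero (hx : exp (-exp K) ≤ x) (hx1 : x < 1) :
    logNegLogExcess K x = 0 :=
  max_eq_right (sub_nonpos.2 ((log_neg_log_le_iff ((exp_pos _).trans_le hx) hx1).2 hx))

theorem logNegLogExcess_eq_sub (hx0 : 0 < x) (hx : x ≤ exp (-exp K)) (hx1 : x < 1) :
    logNegLogExcess K x = log (-log x) - K :=
  max_eq_left (sub_nonneg.2 ((le_log_neg_log_iff hx0 hx1).2 hx))

theorem antitoneOn_logNegLogExcess : AntitoneOn (logNegLogExcess K) (Ioo 0 1) :=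
  fun _ hx _ hy hxy => max_le_max_right 0 (sub_le_sub_right (antitoneOn_log_neg_log hx hy hxy) K)

theorem continuousOn_logNegLogExcess : ContinuousOn (logNegLogExcess K) (Ioo 0 1) :=
  (continuousOn_log_neg_log.sub continuousOn_const).sup continuousOn_const

theorem integral_logNegLogExcess_le_of_le (ha : 0 < a) (hab : a ≤ b) (hb : b ≤ exp (-exp K))
    (hb1 : b < 1) :
    ∫ x in a..b, logNegLogExcess K x ≤
      (b - a) * (logNegLogExcess K b + log (1 + exp (-K))) := by
  have hsub : Icc a b ⊆ Ioo 0 1 := Icc_subset_Ioo ha hb1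
  have hexp : exp K ≤ -log b := by
    rw [← le_log_iff_exp_le (neg_log_pos (ha.trans_le hab) hb1)]
    exact (le_log_neg_log_iff (ha.trans_le hab) hb1).2 hb
  rw [intervalIntegral.integral_congr (g := fun x => log (-log x) - K) (by
      rw [uIcc_of_le hab]
      exact fun x hx => logNegLogExcess_eq_sub (hsub hx).1 (hx.2.trans hb) (hsub hx).2),
    intervalIntegral.integral_sub
      ((continuousOn_log_neg_log.mono hsub).intervalIntegrable_of_Icc hab)
      intervalIntegrable_const,
    intervalIntegral.integral_const, smul_eq_mul,
    logNegLogExcess_eq_sub (ha.trans_le hab) hb hb1]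
  have := integral_log_neg_log_le ha hab hb1
  have := log_one_sub_log_le hexp
  nlinarith

/-- Past the point `exp (-exp K)`, where `log (-log x) = K`, the excess vanishes, so only the
part of `[a, b]` to the left of it contributes. -/
theorem integral_logNegLogExcess_le (ha : 0 < a) (hab : a ≤ b) (hb : b < 1) :
    ∫ x in a..b, logNegLogExcess K x ≤
      (b - a) * (logNegLogExcess K b + log (1 + exp (-K))) := by
  set c := exp (-exp K)
  have hB : 0 ≤ log (1 + exp (-K)) := log_nonneg (by linarith [exp_pos (-K)])
  rcases le_or_gt b c with hbc | hcb
  · exact integral_logNegLogExcess_le_of_le ha hab hbc hb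
  have hzero : ∀ u, c ≤ u → u ≤ b →
      ∫ x in u..b, logNegLogExcess K x = 0 := fun u hcu hub => by
    rw [intervalIntegral.integral_congr (g := fun _ => 0) (by
        rw [uIcc_of_le hub]
        exact fun x hx => logNegLogExcess_eq_zero (hcu.trans hx.1) (hx.2.trans_lt hb))]
    simp
  rw [logNegLogExcess_eq_zero hcb.le hb, zero_add]
  rcases le_or_gt c a with hca | hac
  · rw [hzero a hca hab]
    positivity
  have hint : ∀ u v, a ≤ u → u ≤ v → v ≤ b →
      IntervalIntegrable (logNegLogExcess K) volume u v :=
    fun u v hau huv hvb => (continuousOn_logNegLogExcess.mono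
      (Icc_subset_Ioo (ha.trans_le hau) (hvb.trans_lt hb))).intervalIntegrable_of_Icc huv
  rw [← intervalIntegral.integral_add_adjacent_intervals (hint a c le_rfl hac.le hcb.le)
      (hint c b hac.le hcb.le le_rfl), hzero c le_rfl hcb.le, add_zero]
  calc ∫ x in a..c, logNegLogExcess K x
      ≤ (c - a) * (logNegLogExcess K c + log (1 + exp (-K))) :=
        integral_logNegLogExcess_le_of_le ha hac.le le_rfl (hcb.trans hb)
    _ = (c - a) * log (1 + exp (-K)) := by
        rw [logNegLogExcess_eq_zero le_rfl (hcb.trans hb), zero_add]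
    _ ≤ (b - a) * log (1 + exp (-K)) := by gcongr

theorem lowOsc_logNegLogExcess_le (ha : 0 < a) (hab : a < b) (hb : b < 1) :
    lowOsc (logNegLogExcess K) a b ≤ log (1 + exp (-K)) := by
  have hmean : intAvg (logNegLogExcess K) a b ≤ logNegLogExcess K b + log (1 + exp (-K)) := by
    rw [intAvg, inv_mul_le_iff₀ (sub_pos.2 hab)]
    exact integral_logNegLogExcess_le ha hab.le hb
  have hinf :=
    ((antitoneOn_logNegLogExcess (K := K)).mono (Icc_subset_Ioo ha hb)).le_essInfIcc hab
  rw [lowOsc]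
  linarith

end LogNegLogExcess

section Truncation

variable {a b K : ℝ}

/-- On `(0, e⁻¹)` the function `log (-log x)` is positive, so only its upper truncation acts. -/
theorem eqOn_sub_truncation_logNegLogExcess (hK : 0 ≤ K) :
    EqOn (fun x => log (-log x) - max (-K) (min K (log (-log x)))) (logNegLogExcess K)
      (Ioo 0 (exp (-1))) := fun x hx => by
  have hx1 : x < 1 := hx.2.trans exp_neg_one_lt_one
  have hpos : 0 ≤ log (-log x) := (le_log_neg_log_iff hx.1 hx1).2 (by simpa using hx.2.le)
  exact sub_max_min_eq_max_sub_zero hK (by linarith)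

theorem lowOsc_sub_truncation_le (hK : 0 ≤ K) (ha : 0 < a) (hab : a < b) (hb : b < exp (-1)) :
    lowOsc (fun x => log (-log x) - max (-K) (min K (log (-log x)))) a b ≤
      log (1 + exp (-K)) := by
  rw [lowOsc_congr hab.le ((eqOn_sub_truncation_logNegLogExcess hK).mono (Icc_subset_Ioo ha hb))]
  exact lowOsc_logNegLogExcess_le ha hab (hb.trans exp_neg_one_lt_one)

theorem zero_mem_oscSetOn_sub_truncation (hK : 0 < K) :
    0 ∈ oscSetOn (fun x => log (-log x) - max (-K) (min K (log (-log x))))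
      (Ioo 0 (exp (-1))) := by
  set a := exp (-exp K)
  set b := exp (-exp (K / 2))
  have hab : a < b := exp_lt_exp.2 (neg_lt_neg (exp_lt_exp.2 (half_lt_self hK)))
  have hb : b < exp (-1) := exp_lt_exp.2 (neg_lt_neg (one_lt_exp_iff.2 (half_pos hK)))
  have hsub : Icc a b ⊆ Ioo 0 (exp (-1)) := Icc_subset_Ioo (exp_pos _) hb
  have hzero : EqOn (logNegLogExcess K) (fun _ => 0) (Icc a b) := fun x hx =>
    logNegLogExcess_eq_zero hx.1 (hx.2.trans_lt (hb.trans exp_neg_one_lt_one))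
  refine ⟨a, b, hab, hsub, ?_⟩
  rw [lowOsc_congr hab.le ((eqOn_sub_truncation_logNegLogExcess hK.le).mono hsub),
    lowOsc_congr hab.le hzero, lowOsc_const hab]

end Truncation

theorem tendsto_log_one_add_exp_neg_natCast :
    Tendsto (fun k : ℕ => log (1 + exp (-(k : ℝ)))) atTop (nhds 0) := by
  have hexp : Tendsto (fun k : ℕ => exp (-(k : ℝ))) atTop (nhds 0) :=
    tendsto_exp_atBot.comp (tendsto_neg_atTop_atBot.comp tendsto_natCast_atTop_atTop)
  simpa using (tendsto_const_nhds (x := (1 : ℝ)).add hexp).log (by norm_num)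

/-- for `f(x) = log(−log x)` on `J = (0, 1/e)` and its truncations
`T_k f = max(−k, min(k, f))`, one has `‖f − T_k f‖_{BLO(J)} ≤ log(1 + e^(−k))` for
every `k ∈ ℕ`; in particular `‖f − T_k f‖_{BLO(J)} → 0` as `k → ∞`. -/
theorem log_neg_log_truncation_approx :
    (∀ k : ℕ,
      BddAbove (oscSetOn
        (fun x => Real.log (-Real.log x) -
          max (-(k:ℝ)) (min (k:ℝ) (Real.log (-Real.log x))))
        (Set.Ioo (0:ℝ) (Real.exp (-1)))) ∧
      bloNormOn
        (fun x => Real.log (-Real.log x) -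
          max (-(k:ℝ)) (min (k:ℝ) (Real.log (-Real.log x))))
        (Set.Ioo (0:ℝ) (Real.exp (-1)))
        ≤ Real.log (1 + Real.exp (-(k:ℝ)))) ∧
    Filter.Tendsto (fun k : ℕ =>
        bloNormOn
          (fun x => Real.log (-Real.log x) -
            max (-(k:ℝ)) (min (k:ℝ) (Real.log (-Real.log x))))
          (Set.Ioo (0:ℝ) (Real.exp (-1))))
      Filter.atTop (nhds 0) := by
  have hosc (k : ℕ) (a b : ℝ) (hab : a < b) (hsub : Icc a b ⊆ Ioo 0 (exp (-1))) :=
    lowOsc_sub_truncation_le k.cast_nonneg (hsub ⟨le_rfl, hab.le⟩).1 hab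
      (hsub ⟨hab.le, le_rfl⟩).2
  have hbdd (k : ℕ) := bddAbove_oscSetOn_of_forall_lowOsc_le (hosc k)
  have hle (k : ℕ) :=
    bloNormOn_le_of_forall_lowOsc_le (log_nonneg (by linarith [exp_pos (-(k : ℝ))])) (hosc k)
  have hnonneg : ∀ᶠ k : ℕ in atTop, 0 ≤ bloNormOn
      (fun x => log (-log x) - max (-(k : ℝ)) (min (k : ℝ) (log (-log x))))
      (Ioo 0 (exp (-1))) :=
    eventually_atTop.2 ⟨1, fun k hk =>
      le_csSup (hbdd k) (zero_mem_oscSetOn_sub_truncation (by exact_mod_cast hk))⟩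
  exact ⟨fun k => ⟨hbdd k, hle k⟩,
    tendsto_of_tendsto_of_tendsto_of_le_of_le' tendsto_const_nhds
      tendsto_log_one_add_exp_neg_natCast hnonneg (Eventually.of_forall hle)⟩

end
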